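/- Let B be a commutative monoid satisfying the splitting condition. Then the hyperaddition on s(B) is associative: for all a, b, c in s(B), (a + b) + c = a + (b + c), where the sum of a subset and an element is the union of the pairwise hypersums. -/

import Mathlib

/-- The splitting condition on a commutative monoid. -/
def SplitCond (M : Type*) [AddCommMonoid M] : Prop :=
  ∀ x y u v : M, x + y = u + v →
    ∃ z : M, (x + z = u ∧ z + v = y) ∨ (x = u + z ∧ v = z + y)

/-- The basic identification `(a, 1) ∼ (b, -1)` when `a + b = 0` (true = +1, false = -1). -/
def symRel (M : Type*) [AddCommMonoid M] : M × Bool → M × Bool → Prop :=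
  fun p q => p.2 ≠ q.2 ∧ p.1 + q.1 = 0

/-- The symmetrization `s(M)` as the quotient of `M × {±1}` by the generated equivalence. -/
def SymHG (M : Type*) [AddCommMonoid M] := Quot (symRel M)

/-- The hyperlaw on representatives. -/
def hsum {M : Type*} [AddCommMonoid M] : M × Bool → M × Bool → Set (M × Bool)
  | (a, true), (b, true) => {(a + b, true)}
  | (a, false), (b, false) => {(a + b, false)}
  | (a, true), (b, false) =>
      {r | (∃ z, r = (z, true) ∧ z + b = a) ∨ (∃ z, r = (z, false) ∧ z + a = b)}
  | (a, false), (b, true) =>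
      {r | (∃ z, r = (z, true) ∧ z + a = b) ∨ (∃ z, r = (z, false) ∧ z + b = a)}

/-- The induced hypersum on the quotient `s(M)` (union over representatives). -/
def hadd {M : Type*} [AddCommMonoid M] (x y : SymHG M) : Set (SymHG M) :=
  {c | ∃ p q r, Quot.mk (symRel M) p = x ∧ Quot.mk (symRel M) q = y ∧
      Quot.mk (symRel M) r = c ∧ r ∈ hsum p q}

/-- The neutral element of `s(M)`. -/
def szero (M : Type*) [AddCommMonoid M] : SymHG M := Quot.mk (symRel M) (0, true)

/-!
On representatives, `hsum` is commutative and commutes with flipping all signs. Associativity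
amounts to invariance of `(p + q) + r` under rotating `(p, q, r)`, and these two symmetries reduce
it to the sign patterns `(+, +, +)`, where it is associativity of `M`, and `(+, +, -)`, where
comparing `(a + b) - c` with `(a - c) + b` is exactly the splitting condition. Passing to `s(M)`
costs nothing: the image of `hsum p q` depends only on the classes of `p` and `q`, because
`(a, +) ∼ (b, -)` forces `a` to be invertible, and then its hypersums are singletons.
-/

namespace SplitCond

variable {M : Type*} [AddCommMonoid M]

theorem add_eq_add_iff (h : SplitCond M) {a b c x : M} :
    x + c = a + b ↔ ∃ z, z + a = c ∧ x + z = b ∨ z + c = a ∧ x = z + b := by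
  constructor
  · intro hx
    obtain ⟨z, ⟨h1, h2⟩ | ⟨h1, h2⟩⟩ := h x c b a (hx.trans (add_comm a b))
    · exact ⟨z, Or.inl ⟨h2, h1⟩⟩
    · exact ⟨z, Or.inr ⟨h2.symm, h1.trans (add_comm b z)⟩⟩
  · rintro ⟨z, ⟨rfl, rfl⟩ | ⟨rfl, rfl⟩⟩ <;> abel

end SplitCond

def flipSign {α : Type*} (p : α × Bool) : α × Bool := (p.1, !p.2)

lemma flipSign_involutive {α : Type*} : Function.Involutive (flipSign (α := α)) := fun _ => by
  simp [flipSign]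

section Representatives

variable {M : Type*} [AddCommMonoid M]

def hsum₃ (p q r : M × Bool) : Set (M × Bool) := ⋃ w ∈ hsum p q, hsum w r

lemma hsum_comm (p q : M × Bool) : hsum p q = hsum q p := by
  obtain ⟨a, _ | _⟩ := p <;> obtain ⟨b, _ | _⟩ := q <;> simp [hsum, add_comm a b]

lemma hsum_flipSign (p q : M × Bool) :
    hsum (flipSign p) (flipSign q) = flipSign ⁻¹' hsum p q := by
  ext ⟨x, s⟩
  obtain ⟨a, _ | _⟩ := p <;> obtain ⟨b, _ | _⟩ := q <;> cases s <;> simp [hsum, flipSign]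

lemma hsum₃_flipSign (p q r : M × Bool) :
    hsum₃ (flipSign p) (flipSign q) (flipSign r) = flipSign ⁻¹' hsum₃ p q r := by
  simp only [hsum₃, hsum_flipSign, ← flipSign_involutive.image_eq_preimage_symm,
    Set.biUnion_image, Set.image_iUnion₂]

lemma hsum₃_comm (p q r : M × Bool) : hsum₃ p q r = hsum₃ q p r := by
  rw [hsum₃, hsum_comm, hsum₃]

lemma hsum₃_rotate_pos (a b c : M) :
    hsum₃ (a, true) (b, true) (c, true) = hsum₃ (b, true) (c, true) (a, true) := by
  ext ⟨x, _ | _⟩ <;> simp [hsum₃, hsum, add_rotate a]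

lemma hsum₃_right_comm_pos_neg (h : SplitCond M) (a b c : M) :
    hsum₃ (a, true) (b, true) (c, false) = hsum₃ (a, true) (c, false) (b, true) := by
  ext ⟨x, _ | _⟩ <;> simp [hsum₃, hsum, h.add_eq_add_iff, add_assoc, add_comm b a]

lemma hsum₃_rotate_flipSign {p q r : M × Bool} (H : hsum₃ p q r = hsum₃ q r p) :
    hsum₃ (flipSign p) (flipSign q) (flipSign r) =
      hsum₃ (flipSign q) (flipSign r) (flipSign p) := by
  rw [hsum₃_flipSign, hsum₃_flipSign, H]

theorem hsum₃_rotate (h : SplitCond M) (p q r : M × Bool) : hsum₃ p q r = hsum₃ q r p := by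
  have ttt := hsum₃_rotate_pos (M := M)
  have ttf (a b c : M) :
      hsum₃ (a, true) (b, true) (c, false) = hsum₃ (b, true) (c, false) (a, true) := by
    rw [hsum₃_comm, hsum₃_right_comm_pos_neg h]
  have tft (a b c : M) :
      hsum₃ (a, true) (b, false) (c, true) = hsum₃ (b, false) (c, true) (a, true) := by
    rw [← hsum₃_right_comm_pos_neg h, hsum₃_comm, hsum₃_right_comm_pos_neg h, hsum₃_comm]
  have ftt (a b c : M) :
      hsum₃ (a, false) (b, true) (c, true) = hsum₃ (b, true) (c, true) (a, false) := by
    rw [hsum₃_comm, ← hsum₃_right_comm_pos_neg h]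
  obtain ⟨a, _ | _⟩ := p <;> obtain ⟨b, _ | _⟩ := q <;> obtain ⟨c, _ | _⟩ := r
  · exact hsum₃_rotate_flipSign (ttt a b c)
  · exact hsum₃_rotate_flipSign (ttf a b c)
  · exact hsum₃_rotate_flipSign (tft a b c)
  · exact ftt a b c
  · exact hsum₃_rotate_flipSign (ftt a b c)
  · exact tft a b c
  · exact ttf a b c
  · exact ttt a b c

theorem hsum_assoc (h : SplitCond M) (p q r : M × Bool) :
    (⋃ w ∈ hsum p q, hsum w r) = ⋃ w ∈ hsum q r, hsum p w := by
  rw [← hsum₃, hsum₃_rotate h, hsum₃]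
  simp only [hsum_comm _ p]

end Representatives

namespace SymHG

variable {M : Type*} [AddCommMonoid M]

def mk : M × Bool → SymHG M := Quot.mk (symRel M)

lemma mk_surjective : Function.Surjective (mk (M := M)) := Quot.exists_rep

lemma mk_image_hsum_neg_pos {a b : M} (hab : a + b = 0) (c : M) :
    mk '' hsum (b, false) (c, true) = {mk (a + c, true)} := by
  ext x
  simp only [Set.mem_image, Set.mem_singleton_iff]
  constructor
  · rintro ⟨_, ⟨z, rfl, hz⟩ | ⟨z, rfl, hz⟩, rfl⟩
    · calc mk (z, true) = mk (a + b + z, true) := by rw [hab, zero_add]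
        _ = mk (a + c, true) := by rw [← hz]; abel_nf
    · refine Quot.sound ⟨by simp, ?_⟩
      calc z + (a + c) = a + (z + c) := by abel
        _ = 0 := by rw [hz, hab]
  · rintro rfl
    exact ⟨(a + c, true), Or.inl ⟨a + c, rfl, by rw [add_right_comm, hab, zero_add]⟩, rfl⟩

lemma mk_image_hsum_pos_neg {a b : M} (hab : a + b = 0) (c : M) :
    mk '' hsum (a, true) (c, false) = {mk (b + c, false)} := by
  ext x
  simp only [Set.mem_image, Set.mem_singleton_iff]
  constructor
  · rintro ⟨_, ⟨z, rfl, hz⟩ | ⟨z, rfl, hz⟩, rfl⟩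
    · refine Quot.sound ⟨by simp, ?_⟩
      calc z + (b + c) = b + (z + c) := by abel
        _ = 0 := by rw [hz, add_comm, hab]
    · calc mk (z, false) = mk (a + b + z, false) := by rw [hab, zero_add]
        _ = mk (b + c, false) := by rw [← hz]; abel_nf
  · rintro rfl
    exact ⟨(b + c, false), Or.inr ⟨b + c, rfl, by rw [add_right_comm, add_comm b a, hab, zero_add]⟩,
      rfl⟩

lemma mk_image_hsum_pos_eq_neg {a b : M} (hab : a + b = 0) (q : M × Bool) :
    mk '' hsum (a, true) q = mk '' hsum (b, false) q := by
  obtain ⟨c, _ | _⟩ := q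
  · rw [mk_image_hsum_pos_neg hab]
    exact Set.image_singleton.symm
  · rw [mk_image_hsum_neg_pos hab]
    exact Set.image_singleton

lemma mk_image_hsum_congr_left {p p' : M × Bool} (hr : symRel M p p') (q : M × Bool) :
    mk '' hsum p q = mk '' hsum p' q := by
  obtain ⟨a, _ | _⟩ := p <;> obtain ⟨b, _ | _⟩ := p' <;> obtain ⟨hne, hab : a + b = 0⟩ := hr <;>
    simp only [ne_eq, not_true_eq_false] at hne
  · exact (mk_image_hsum_pos_eq_neg ((add_comm b a).trans hab) q).symm
  · exact mk_image_hsum_pos_eq_neg hab q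

lemma mk_image_hsum_congr {p p' q q' : M × Bool} (hp : mk p = mk p') (hq : mk q = mk q') :
    mk '' hsum p q = mk '' hsum p' q' := by
  have congr_left (q : M × Bool) {p p'} (hp : mk p = mk p') : mk '' hsum p q = mk '' hsum p' q :=
    congrArg (Quot.lift (fun p => mk '' hsum p q) fun _ _ hr => mk_image_hsum_congr_left hr q) hp
  rw [congr_left q hp, hsum_comm, congr_left p' hq, hsum_comm]

lemma hadd_mk (p q : M × Bool) : hadd (mk p) (mk q) = mk '' hsum p q := by
  ext x
  constructor
  · rintro ⟨p', q', r, hp', hq', rfl, hr⟩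
    rw [mk_image_hsum_congr hp'.symm hq'.symm]
    exact ⟨r, hr, rfl⟩
  · rintro ⟨r, hr, rfl⟩
    exact ⟨p, q, r, rfl, rfl, rfl, hr⟩

end SymHG

theorem hadd_assoc {M : Type*} [AddCommMonoid M] (h : SplitCond M) :
    ∀ a b c : SymHG M,
      (⋃ w ∈ hadd a b, hadd w c) = ⋃ w ∈ hadd b c, hadd a w := by
  intro a b c
  obtain ⟨p, rfl⟩ := SymHG.mk_surjective a
  obtain ⟨q, rfl⟩ := SymHG.mk_surjective b
  obtain ⟨r, rfl⟩ := SymHG.mk_surjective c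
  simp only [SymHG.hadd_mk, Set.biUnion_image, ← Set.image_iUnion₂, hsum_assoc h]
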